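/- In the marriage problem with P1 = (M1,M1,M2,W1,W2,W1) under the man-proposing DA with truthful men and utility u_conv = (25,5,1), the set H = {W1,W2} × {W1,...,W6} × {W1,...,W6} of women's report profiles is a partial preimage of μ^M_1 = [(m1,w1),(m2,w2),(m3,w3)] that is closed under weakly better replies; hence μ^M_1 is asymptotically stable. -/

import Mathlib

open scoped Classical

/-- A marriage problem's (strict) preference profile, given by injective rank
functions over potential partners plus the option `none` of staying single
(lower rank = more preferred). -/
structure Pref (M W : Type) where
  mrank : M → Option W → ℕ
  wrank : W → Option M → ℕ
  minj : ∀ a x y, mrank a x = mrank a y → x = y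
  winj : ∀ b x y, wrank b x = wrank b y → x = y

/-- A one-to-one matching between `M` and `W` (with `none` = single). -/
structure Matching (M W : Type) where
  mu : M → Option W
  nu : W → Option M
  consistent : ∀ a b, mu a = some b ↔ nu b = some a

/-- No player strictly prefers being single to the assigned partner. -/
def IndivRational {M W : Type} (P : Pref M W) (μ : Matching M W) : Prop :=
  (∀ a, ¬ P.mrank a none < P.mrank a (μ.mu a)) ∧
  (∀ b, ¬ P.wrank b none < P.wrank b (μ.nu b))

/-- The pair `(a, b)` blocks `μ`. -/
def Blocks {M W : Type} (P : Pref M W) (μ : Matching M W) (a : M) (b : W) : Prop :=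
  P.mrank a (some b) < P.mrank a (μ.mu a) ∧ P.wrank b (some a) < P.wrank b (μ.nu b)

/-- Stability: individual rationality together with absence of blocking pairs. -/
def StableMatching {M W : Type} (P : Pref M W) (μ : Matching M W) : Prop :=
  IndivRational P μ ∧ ∀ a b, ¬ Blocks P μ a b

noncomputable section

variable {M W : Type} [Fintype M] [Fintype W]

/-- `b` is acceptable to man `a`. -/
def mAcc (P : Pref M W) (a : M) (b : W) : Prop := P.mrank a (some b) < P.mrank a none

/-- `a` is acceptable to woman `b`. -/
def wAcc (P : Pref M W) (b : W) (a : M) : Prop := P.wrank b (some a) < P.wrank b none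

/-- The state of the man-proposing deferred acceptance algorithm:
for each man, the index of the next woman on his list to propose to,
and for each woman, the proposer she currently (tentatively) holds. -/
structure DAState (M W : Type) where
  next : M → ℕ
  hold : W → Option M

/-- A man is free if no woman currently holds him. -/
def IsFree (s : DAState M W) (a : M) : Prop := ∀ b, s.hold b ≠ some a

/-- The `k`-th woman (0-indexed) on man `a`'s list of acceptable women,
in decreasing order of preference. -/
def target (P : Pref M W) (a : M) (k : ℕ) : Option W :=
  if h : ∃ b : W, mAcc P a b ∧
      (Finset.univ.filter fun b' => mAcc P a b' ∧
        P.mrank a (some b') < P.mrank a (some b)).card = k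
  then some h.choose else none

/-- Woman `b`'s most preferred acceptable man in the finite set `c` (if any). -/
def best (P : Pref M W) (b : W) (c : Finset M) : Option M :=
  if h : ∃ a ∈ c, wAcc P b a ∧ ∀ a' ∈ c, wAcc P b a' → P.wrank b (some a) ≤ P.wrank b (some a')
  then some h.choose else none

/-- One round of the man-proposing deferred acceptance algorithm: every free
man proposes to the next woman on his list; every woman holds the best
acceptable man among her current proposers and the man she held before. -/
def daStep (P : Pref M W) (s : DAState M W) : DAState M W where
  next a := if IsFree s a ∧ (target P a (s.next a)).isSome then s.next a + 1 else s.next a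
  hold b := best P b
    ((Finset.univ.filter fun a => IsFree s a ∧ target P a (s.next a) = some b) ∪
      (s.hold b).toFinset)

/-- The algorithm terminates when no free man has anyone left to propose to. -/
def Finished (P : Pref M W) (s : DAState M W) : Prop :=
  ∀ a, IsFree s a → target P a (s.next a) = none

/-- Iterate the deferred acceptance rounds (with fuel). -/
def daRun (P : Pref M W) : ℕ → DAState M W → DAState M W
  | 0, s => s
  | n + 1, s => if Finished P s then s else daRun P n (daStep P s)

/-- The initial state: every man is free and about to propose to his favorite. -/
def daInit : DAState M W := ⟨fun _ => 0, fun _ => none⟩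

/-- The final state of the man-proposing deferred acceptance algorithm
(the fuel is enough for the algorithm to have terminated). -/
def daFinal (P : Pref M W) : DAState M W :=
  daRun P (Fintype.card M * (Fintype.card W + 1) + 1) daInit

/-- The partner of woman `b` under the man-proposing DA matching. -/
def daNu (P : Pref M W) (b : W) : Option M := (daFinal P).hold b

/-- The partner of man `a` under the man-proposing DA matching. -/
def daMu (P : Pref M W) (a : M) : Option W :=
  if h : ∃ b, (daFinal P).hold b = some a then some h.choose else none

/-- Man `a` proposes to woman `b` at some point during the run of the
man-proposing deferred acceptance algorithm. -/
def Proposes (P : Pref M W) (a : M) (b : W) : Prop :=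
  ∃ n, IsFree (daRun P n daInit) a ∧ target P a ((daRun P n daInit).next a) = some b

end

/-- The rank function of the strict preference list `(a, b, c)` over `Fin 3`
(with staying single ranked last). -/
def pl (a b _c : Fin 3) : Option (Fin 3) → ℕ
  | some x => if x = a then 0 else if x = b then 1 else 2
  | none => 3

/-- The six possible strict preference lists over three partners, labelled
`0,…,5` for `M1,…,M6` (equivalently `W1,…,W6`):
`(1,2,3), (1,3,2), (2,1,3), (2,3,1), (3,1,2), (3,2,1)`. -/
def lab : Fin 6 → Option (Fin 3) → ℕ :=
  ![pl 0 1 2, pl 0 2 1, pl 1 0 2, pl 1 2 0, pl 2 0 1, pl 2 1 0]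

lemma lab_inj : ∀ (k : Fin 6) (x y : Option (Fin 3)), lab k x = lab k y → x = y := by
  decide

/-- The `3 × 3` marriage problem in which man `a` has the preference list
labelled `pm a` and woman `b` the list labelled `pw b`. -/
def mkPref (pm pw : Fin 3 → Fin 6) : Pref (Fin 3) (Fin 3) where
  mrank a := lab (pm a)
  wrank b := lab (pw b)
  minj a := lab_inj (pm a)
  winj b := lab_inj (pw b)

/-- The matching pairing man `a` with woman `f a` (with inverse map `g`). -/
def mkMatch (f g : Fin 3 → Fin 3) (hc : ∀ a b, f a = b ↔ g b = a) :
    Matching (Fin 3) (Fin 3) :=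
  ⟨fun a => some (f a), fun b => some (g b), by simp [hc]⟩

noncomputable section MixedGame

variable {I : Type} [Fintype I] [DecidableEq I] {S : I → Type} [∀ i, Fintype (S i)]

/-- A mixed strategy profile: one probability distribution per player. -/
def IsMixed (x : ∀ i, S i → ℝ) : Prop :=
  ∀ i, (∀ h, 0 ≤ x i h) ∧ ∑ h, x i h = 1

/-- The mixed profile `x` is supported on the product set `H`. -/
def SupportedOn (x : ∀ i, S i → ℝ) (H : ∀ i, Set (S i)) : Prop :=
  ∀ i h, x i h ≠ 0 → h ∈ H i

/-- Expected payoff to player `i` under the mixed strategy profile `x`. -/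
def expPay (π : ∀ _ : I, (∀ j, S j) → ℝ) (i : I) (x : ∀ j, S j → ℝ) : ℝ :=
  ∑ s : ∀ j, S j, (∏ j, x j (s j)) * π i s

/-- The Dirac (pure) mixed strategy on `h`. -/
def delta {i : I} (h : S i) : S i → ℝ := fun t => if t = h then 1 else 0

/-- `H` is closed under weakly better replies: any pure strategy of a player
that earns at least the average payoff against some mixed profile supported on
`H` already belongs to the player's component of `H`. -/
def CUWBR (π : ∀ _ : I, (∀ j, S j) → ℝ) (H : ∀ i, Set (S i)) : Prop :=
  ∀ (i : I) (h : S i),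
    (∃ x, IsMixed x ∧ SupportedOn x H ∧
      expPay π i x ≤ expPay π i (Function.update x i (delta h))) → h ∈ H i

end MixedGame

/-- Men's true preferences in `P1`: `(M1, M1, M2)` (men report truthfully). -/
def menP1 : Fin 3 → Fin 6 := ![0, 0, 1]

/-- Women's true preferences in `P1`: `(W1, W2, W1)`. -/
def womenP1 : Fin 3 → Fin 6 := ![0, 1, 0]

/-- The utility function `u_conv = (25, 5, 1)`: payoff from being matched with
one's first, second, or third true choice. -/
noncomputable def uconv : ℕ → ℝ := fun n =>
  if n = 0 then 25 else if n = 1 then 5 else if n = 2 then 1 else 0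

/-- Payoff of woman `i` in the revelation game of problem `P1` (men truthful,
man-proposing DA): `u_conv` applied to the true rank of her DA partner. -/
noncomputable def piP1 : ∀ _ : Fin 3, (Fin 3 → Fin 6) → ℝ := fun i r =>
  uconv (lab (womenP1 i) (daNu (mkPref menP1 r) i))

/-- `μ^M_1 = [(m1,w1), (m2,w2), (m3,w3)]`. -/
def muM1 : Matching (Fin 3) (Fin 3) := mkMatch ![0, 1, 2] ![0, 1, 2] (by decide)

/-- `H = {W1,W2} × {W1,…,W6} × {W1,…,W6}`. -/
def H19 : ∀ _ : Fin 3, Set (Fin 6) := ![{0, 1}, Set.univ, Set.univ]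

/-- A matching is asymptotically stable in the revelation game with payoffs `π`
if it has a (nonempty) partial preimage closed under weakly better replies. -/
def AsympStable (π : ∀ _ : Fin 3, (Fin 3 → Fin 6) → ℝ)
    (μ : Matching (Fin 3) (Fin 3)) : Prop :=
  ∃ H : ∀ _ : Fin 3, Set (Fin 6),
    (∃ r : Fin 3 → Fin 6, ∀ i, r i ∈ H i) ∧
    (∀ r : Fin 3 → Fin 6, (∀ i, r i ∈ H i) →
      daMu (mkPref menP1 r) = μ.mu ∧ daNu (mkPref menP1 r) = μ.nu) ∧
    CUWBR π H

/-! Every man of `P1` ranks `w1` first, so all three propose to her in the first round and she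
keeps her reported favourite to the end. Her payoff therefore depends on her own report alone,
and it is the maximal `25` exactly for the reports `W1`, `W2`, which put `m1` first: against any
profile supported on `H` no report outside `{W1, W2}` is a weakly better reply for her, while the
other two components of `H` are full. When `w1` holds `m1`, the rejected `m2` and `m3` go on to
their second choices `w2` and `w3`, which gives `μ^M_1`. -/

section DeferredAcceptance

variable {M W : Type}

lemma card_filter_rank_lt_lt [Fintype W] (P : Pref M W) (a : M) {b b' : W} (hb : mAcc P a b)
    (hlt : P.mrank a (some b) < P.mrank a (some b')) :
    (Finset.univ.filter fun c => mAcc P a c ∧ P.mrank a (some c) < P.mrank a (some b)).card <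
    (Finset.univ.filter fun c => mAcc P a c ∧ P.mrank a (some c) < P.mrank a (some b')).card := by
  refine Finset.card_lt_card (Finset.ssubset_iff_of_subset ?_ |>.2 ⟨b, ?_, ?_⟩)
  · intro c hc
    simp only [Finset.mem_filter] at hc ⊢
    exact ⟨hc.1, hc.2.1, hc.2.2.trans hlt⟩
  · simpa using ⟨hb, hlt⟩
  · simp

lemma target_eq_some [Fintype M] [Fintype W] (P : Pref M W) {a : M} {k : ℕ} {b : W}
    (hb : mAcc P a b)
    (hk : (Finset.univ.filter fun b' => mAcc P a b' ∧
        P.mrank a (some b') < P.mrank a (some b)).card = k) :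
    target P a k = some b := by
  have hex : ∃ b : W, mAcc P a b ∧ (Finset.univ.filter fun b' => mAcc P a b' ∧
      P.mrank a (some b') < P.mrank a (some b)).card = k := ⟨b, hb, hk⟩
  rw [target, dif_pos hex]
  obtain ⟨hc, hck⟩ := hex.choose_spec
  congr 1
  rcases lt_trichotomy (P.mrank a (some hex.choose)) (P.mrank a (some b)) with h | h | h
  · exact absurd (hck.trans hk.symm) (card_filter_rank_lt_lt P a hc h).ne
  · exact Option.some.inj (P.minj a _ _ h)
  · exact absurd (hk.trans hck.symm) (card_filter_rank_lt_lt P a hb h).ne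

lemma target_eq_none_of_card_le [Fintype M] [Fintype W] (P : Pref M W) (a : M) {k : ℕ}
    (hk : Fintype.card W ≤ k) : target P a k = none := by
  rw [target, dif_neg]
  rintro ⟨b, -, hb⟩
  have : (Finset.univ.filter fun b' => mAcc P a b' ∧
      P.mrank a (some b') < P.mrank a (some b)).card < Fintype.card W :=
    Finset.card_lt_univ_of_notMem (x := b) (by simp)
  omega

lemma best_eq_some [Fintype M] (P : Pref M W) {b : W} {c : Finset M} {a : M} (ha : a ∈ c)
    (hab : wAcc P b a)
    (hmin : ∀ a' ∈ c, wAcc P b a' → P.wrank b (some a) ≤ P.wrank b (some a')) :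
    best P b c = some a := by
  have hex : ∃ a ∈ c, wAcc P b a ∧ ∀ a' ∈ c, wAcc P b a' →
      P.wrank b (some a) ≤ P.wrank b (some a') := ⟨a, ha, hab, hmin⟩
  rw [best, dif_pos hex]
  obtain ⟨hm, hw, hmin'⟩ := hex.choose_spec
  exact P.winj b _ _ (le_antisymm (hmin' a ha hab) (hmin _ hm hw))

lemma daMu_eq_some [Fintype M] [Fintype W] (P : Pref M W) {a : M} {b : W}
    (h : ∀ c, (daFinal P).hold c = some a ↔ c = b) : daMu P a = some b := by
  have hex : ∃ c, (daFinal P).hold c = some a := ⟨b, (h b).2 rfl⟩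
  rw [daMu, dif_pos hex, (h _).1 hex.choose_spec]

end DeferredAcceptance

section MixedGame

variable {I : Type} [DecidableEq I] {S : I → Type} [∀ i, Fintype (S i)]

lemma IsMixed.sum_prod_eq_one [Fintype I] {x : ∀ i, S i → ℝ} (hx : IsMixed x) :
    ∑ s : ∀ j, S j, ∏ j, x j (s j) = 1 := by
  rw [← Fintype.prod_sum x]
  exact Finset.prod_eq_one fun i _ => (hx i).2

lemma IsMixed.update_delta {x : ∀ i, S i → ℝ} (hx : IsMixed x) (i : I) (h : S i) :
    IsMixed (Function.update x i (delta h)) := by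
  intro j
  by_cases hj : j = i
  · subst hj
    rw [Function.update_self]
    exact ⟨fun t => by unfold delta; split_ifs <;> norm_num, by simp [delta]⟩
  · rw [Function.update_of_ne hj]
    exact hx j

lemma expPay_eq_of_forall [Fintype I] {π : ∀ _ : I, (∀ j, S j) → ℝ} {i : I}
    {x : ∀ j, S j → ℝ} (hx : IsMixed x) {c : ℝ} (hc : ∀ s, ∏ j, x j (s j) ≠ 0 → π i s = c) :
    expPay π i x = c := by
  have h : ∀ s : ∀ j, S j, (∏ j, x j (s j)) * π i s = (∏ j, x j (s j)) * c := by
    intro s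
    by_cases hs : ∏ j, x j (s j) = 0
    · rw [hs, zero_mul, zero_mul]
    · rw [hc s hs]
  rw [expPay, Finset.sum_congr rfl fun s _ => h s, ← Finset.sum_mul, hx.sum_prod_eq_one, one_mul]

lemma mem_of_expPay_le_of_own_payoff [Fintype I] {π : ∀ _ : I, (∀ j, S j) → ℝ}
    {H : ∀ i, Set (S i)} {i : I} {f : S i → ℝ} {c : ℝ} (hπ : ∀ s, π i s = f (s i))
    (hH : ∀ t ∈ H i, f t = c) (hout : ∀ t ∉ H i, f t < c) {x : ∀ j, S j → ℝ}
    (hx : IsMixed x) (hsupp : SupportedOn x H) {h : S i}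
    (hle : expPay π i x ≤ expPay π i (Function.update x i (delta h))) : h ∈ H i := by
  have hpay : expPay π i x = c := expPay_eq_of_forall hx fun s hs =>
    (hπ s).trans (hH _ (hsupp i _ (Finset.prod_ne_zero_iff.mp hs i (Finset.mem_univ i))))
  have hdev : expPay π i (Function.update x i (delta h)) = f h := by
    refine expPay_eq_of_forall (hx.update_delta i h) fun s hs => ?_
    have hsi := Finset.prod_ne_zero_iff.mp hs i (Finset.mem_univ i)
    rw [Function.update_self] at hsi
    have : s i = h := by by_contra hne; exact hsi (if_neg hne)
    rw [hπ, this]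
  by_contra hh
  linarith [hout h hh]

end MixedGame

section LabelledProblems

/- Decidable copies of `target`, `best`, `daStep` and `daRun` on the problems `mkPref`, so that the
DA outcomes of `P1` can be evaluated by the kernel on all `6³` report profiles. Under
`open scoped Classical`, `IsFree` would otherwise be decided by choice. -/

instance IsFree.instDecidablePred (s : DAState (Fin 3) (Fin 3)) : DecidablePred (IsFree s) :=
  fun a => inferInstanceAs (Decidable (∀ b, s.hold b ≠ some a))

def labTarget (l : Fin 6) (k : ℕ) : Option (Fin 3) :=
  (List.finRange 3).find? fun b => lab l (some b) = k

def labBest (l : Fin 6) (c : Finset (Fin 3)) : Option (Fin 3) :=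
  (List.finRange 3).find? fun a => a ∈ c ∧ ∀ a' ∈ c, lab l (some a) ≤ lab l (some a')

def labStep (pm pw : Fin 3 → Fin 6) (s : DAState (Fin 3) (Fin 3)) : DAState (Fin 3) (Fin 3) where
  next a := if IsFree s a ∧ (labTarget (pm a) (s.next a)).isSome then s.next a + 1 else s.next a
  hold b := labBest (pw b)
    ((Finset.univ.filter fun a => IsFree s a ∧ labTarget (pm a) (s.next a) = some b) ∪
      (s.hold b).toFinset)

def labRun (pm pw : Fin 3 → Fin 6) : ℕ → DAState (Fin 3) (Fin 3) → DAState (Fin 3) (Fin 3)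
  | 0, s => s
  | n + 1, s => if ∀ a, IsFree s a → labTarget (pm a) (s.next a) = none then s
      else labRun pm pw n (labStep pm pw s)

lemma lab_some_lt_none (l : Fin 6) (b : Fin 3) : lab l (some b) < lab l none := by
  revert l b; decide

lemma card_filter_lab_lt (l : Fin 6) (b : Fin 3) :
    (Finset.univ.filter fun b' => lab l (some b') < lab l (some b)).card = lab l (some b) := by
  revert l b; decide

lemma target_mkPref (pm pw : Fin 3 → Fin 6) (a : Fin 3) (k : ℕ) :
    target (mkPref pm pw) a k = labTarget (pm a) k := by
  cases h : labTarget (pm a) k with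
  | none =>
    apply target_eq_none_of_card_le
    have hsurj : ∀ l : Fin 6, ∀ k < 3, ∃ b : Fin 3, lab l (some b) = k := by decide
    by_contra! hk
    obtain ⟨b, hb⟩ := hsurj (pm a) k (by simpa using hk)
    simp only [labTarget, List.find?_eq_none, decide_eq_true_eq] at h
    exact h b (List.mem_finRange b) hb
  | some b =>
    have hb : lab (pm a) (some b) = k := by simpa [labTarget] using List.find?_some h
    refine target_eq_some _ (lab_some_lt_none _ _) ?_
    rw [← hb, ← card_filter_lab_lt]
    congr 1
    ext b'
    simp [mkPref, mAcc, lab_some_lt_none]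

lemma best_mkPref (pm pw : Fin 3 → Fin 6) (b : Fin 3) (c : Finset (Fin 3)) :
    best (mkPref pm pw) b c = labBest (pw b) c := by
  cases h : labBest (pw b) c with
  | none =>
    rw [best, dif_neg]
    rintro ⟨a, ha, -, hmin⟩
    simp only [labBest, List.find?_eq_none, decide_eq_true_eq] at h
    exact h a (List.mem_finRange a) ⟨ha, fun a' ha' => hmin a' ha' (lab_some_lt_none _ _)⟩
  | some a =>
    have ha := List.find?_some h
    simp only [decide_eq_true_eq] at ha
    exact best_eq_some _ ha.1 (lab_some_lt_none _ _) fun a' ha' _ => ha.2 a' ha'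

lemma daStep_mkPref (pm pw : Fin 3 → Fin 6) (s : DAState (Fin 3) (Fin 3)) :
    daStep (mkPref pm pw) s = labStep pm pw s := by
  simp only [daStep, labStep, target_mkPref, best_mkPref]
  congr!

lemma daRun_mkPref (pm pw : Fin 3 → Fin 6) (n : ℕ) (s : DAState (Fin 3) (Fin 3)) :
    daRun (mkPref pm pw) n s = labRun pm pw n s := by
  induction n generalizing s with
  | zero => rfl
  | succ n ih => simp only [daRun, labRun, Finished, target_mkPref, daStep_mkPref, ih]

lemma daFinal_mkPref (pm pw : Fin 3 → Fin 6) :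
    daFinal (mkPref pm pw) = labRun pm pw 13 daInit :=
  daRun_mkPref pm pw _ daInit

end LabelledProblems

section ProblemP1

def favorite (l : Fin 6) : Fin 3 := ![0, 0, 1, 1, 2, 2] l

lemma daNu_menP1_zero (r : Fin 3 → Fin 6) :
    daNu (mkPref menP1 r) 0 = some (favorite (r 0)) := by
  have key : ∀ r0 r1 r2 : Fin 6,
      (labRun menP1 ![r0, r1, r2] 13 daInit).hold 0 = some (favorite r0) := by decide +kernel
  obtain ⟨r0, r1, r2, rfl⟩ : ∃ r0 r1 r2, r = ![r0, r1, r2] :=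
    ⟨r 0, r 1, r 2, (FinVec.etaExpand_eq r).symm⟩
  rw [daNu, daFinal_mkPref, key]
  rfl

lemma daFinal_menP1_hold_of_favorite_zero (r : Fin 3 → Fin 6) (h : favorite (r 0) = 0)
    (b : Fin 3) : (daFinal (mkPref menP1 r)).hold b = some b := by
  have key : ∀ r0 r1 r2 : Fin 6, favorite r0 = 0 → ∀ b,
      (labRun menP1 ![r0, r1, r2] 13 daInit).hold b = some b := by decide +kernel
  obtain ⟨r0, r1, r2, rfl⟩ : ∃ r0 r1 r2, r = ![r0, r1, r2] :=
    ⟨r 0, r 1, r 2, (FinVec.etaExpand_eq r).symm⟩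
  rw [daFinal_mkPref]
  exact key r0 r1 r2 h b

lemma da_menP1_eq_muM1_of_favorite_zero (r : Fin 3 → Fin 6) (h : favorite (r 0) = 0) :
    daMu (mkPref menP1 r) = muM1.mu ∧ daNu (mkPref menP1 r) = muM1.nu := by
  have hold := daFinal_menP1_hold_of_favorite_zero r h
  constructor
  · funext a
    rw [daMu_eq_some _ fun c => by rw [hold, Option.some_inj]]
    fin_cases a <;> rfl
  · funext b
    rw [daNu, hold]
    fin_cases b <;> rfl

lemma piP1_zero (r : Fin 3 → Fin 6) : piP1 0 r = ![25, 25, 5, 5, 1, 1] (r 0) := by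
  rw [piP1, daNu_menP1_zero]
  generalize r 0 = t
  fin_cases t <;> simp [favorite, womenP1, lab, pl, uconv]

end ProblemP1

/-- In the problem `P1` under the man-proposing DA with
truthful men and utility `u_conv = (25,5,1)`, the set
`H = {W1,W2} × {W1,…,W6} × {W1,…,W6}` of women's report profiles is a partial
preimage of `μ^M_1` that is closed under weakly better replies; hence `μ^M_1`
is asymptotically stable. -/
theorem P1_H_cuwbr_asymp_stable :
    (∀ r : Fin 3 → Fin 6, (∀ i, r i ∈ H19 i) →
      daMu (mkPref menP1 r) = muM1.mu ∧ daNu (mkPref menP1 r) = muM1.nu) ∧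
    CUWBR piP1 H19 ∧
    AsympStable piP1 muM1 := by
  have preimage : ∀ r : Fin 3 → Fin 6, (∀ i, r i ∈ H19 i) →
      daMu (mkPref menP1 r) = muM1.mu ∧ daNu (mkPref menP1 r) = muM1.nu := by
    intro r hr
    have h0 : r 0 = 0 ∨ r 0 = 1 := by simpa [H19] using hr 0
    exact da_menP1_eq_muM1_of_favorite_zero r (by rcases h0 with h | h <;> rw [h] <;> rfl)
  have closed : CUWBR piP1 H19 := by
    rintro i h ⟨x, hx, hsupp, hle⟩
    fin_cases i
    · refine mem_of_expPay_le_of_own_payoff piP1_zero (c := 25) ?_ ?_ hx hsupp hle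
      · intro t ht
        rcases (by simpa [H19] using ht : t = 0 ∨ t = 1) with rfl | rfl <;> rfl
      · intro t ht
        fin_cases t <;> simp_all [H19] <;> norm_num
    all_goals trivial
  refine ⟨preimage, closed, H19, ⟨fun _ => 0, fun i => ?_⟩, preimage, closed⟩
  fin_cases i <;> simp [H19]
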